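/- arXiv:2401.02010 — 5 statements merged into one kernel-verified Lean document; each statement's English description precedes it below -/
import Mathlib

section
/- For a fixed positive integer m and any integer n with 0 ≤ n ≤ m, the alternating sum ∑_{k=1}^{n} (-1)^{n-k} · C(n,k) · C(m+k, m+1) equals C(m, n-1). -/
/-- Binomial coefficient `C(m, j)` of a natural number `m` with an integer lower
index `j`, which vanishes when `j < 0`. -/
def intChoose (m : ℕ) (j : ℤ) : ℤ :=
  if 0 ≤ j then (m.choose j.toNat : ℤ) else 0

open Polynomial Finset

lemma key_poly (m n : ℕ) :
    ((X + 1 : ℤ[X]) ^ m * X ^ n)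
      = ∑ k ∈ Finset.range (n + 1),
          (-1 : ℤ[X]) ^ (n - k) * (n.choose k : ℤ[X]) * (X + 1) ^ (m + k) := by
  have h : (X : ℤ[X]) ^ n = ((X + 1) + (-1)) ^ n := by ring
  have h2 : ((X + 1 : ℤ[X]) + (-1)) ^ n
      = ∑ k ∈ Finset.range (n + 1), (X + 1) ^ k * (-1) ^ (n - k) * (n.choose k : ℤ[X]) :=
    add_pow _ _ _
  rw [h, h2, Finset.mul_sum]
  refine Finset.sum_congr rfl fun k _ => ?_
  rw [pow_add]
  ring

lemma key_sum (m n : ℕ) :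
    (∑ k ∈ Finset.range (n + 1),
        (-1 : ℤ) ^ (n - k) * (n.choose k : ℤ) * ((m + k).choose (m + 1) : ℤ))
      = if n ≤ m + 1 then ((m.choose (m + 1 - n)) : ℤ) else 0 := by
  have := congrArg (fun p : ℤ[X] => p.coeff (m + 1)) (key_poly m n)
  simp only [finset_sum_coeff] at this
  rw [Polynomial.coeff_mul_X_pow'] at this
  have h2 : ∀ k ∈ Finset.range (n + 1),
      ((-1 : ℤ[X]) ^ (n - k) * (n.choose k : ℤ[X]) * (X + 1) ^ (m + k)).coeff (m + 1)
        = (-1 : ℤ) ^ (n - k) * (n.choose k : ℤ) * ((m + k).choose (m + 1) : ℤ) := by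
    intro k _
    have e1 : ((-1 : ℤ[X]) ^ (n - k) * (n.choose k : ℤ[X]))
        = Polynomial.C ((-1 : ℤ) ^ (n - k) * (n.choose k : ℤ)) := by
      simp only [map_mul, map_pow, map_neg, map_one, Polynomial.C_eq_natCast]
    rw [e1, Polynomial.coeff_C_mul, coeff_X_add_one_pow]
  rw [Finset.sum_congr rfl h2] at this
  rw [← this]
  split_ifs with h
  · rw [coeff_X_add_one_pow]
  · simp

/-- **Claim 4.3 (key binomial identity).** For a fixed positive integer `m` and any
integer `n` with `0 ≤ n ≤ m`,
`∑_{k=1}^{n} (-1)^{n-k} C(n,k) C(m+k, m+1) = C(m, n-1)`. -/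
theorem sum_alternating_choose_eq_choose_pred (m : ℕ) (hm : 0 < m) (n : ℕ) (hn : n ≤ m) :
    (∑ k ∈ Finset.Icc 1 n,
        (-1 : ℤ) ^ (n - k) * (n.choose k : ℤ) * ((m + k).choose (m + 1) : ℤ))
      = intChoose m ((n : ℤ) - 1) := by
  have hsub : Finset.Icc 1 n ⊆ Finset.range (n + 1) := by
    intro k hk
    simp only [Finset.mem_Icc] at hk
    simp [Nat.lt_succ_iff, hk.2]
  have hext : (∑ k ∈ Finset.Icc 1 n,
        (-1 : ℤ) ^ (n - k) * (n.choose k : ℤ) * ((m + k).choose (m + 1) : ℤ))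
      = ∑ k ∈ Finset.range (n + 1),
        (-1 : ℤ) ^ (n - k) * (n.choose k : ℤ) * ((m + k).choose (m + 1) : ℤ) := by
    have h0 : ∀ k ∈ Finset.range (n + 1), k ∉ Finset.Icc 1 n →
        (-1 : ℤ) ^ (n - k) * (n.choose k : ℤ) * ((m + k).choose (m + 1) : ℤ) = 0 := by
      intro k hk hk2
      have hk0 : k = 0 := by
        simp only [Finset.mem_range, Nat.lt_succ_iff] at hk
        simp only [Finset.mem_Icc, not_and, not_le] at hk2
        omega
      subst hk0
      simp [Nat.choose_eq_zero_of_lt (by omega : m < m + 1)]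
    exact Finset.sum_subset hsub h0
  rw [hext, key_sum, if_pos (by omega)]
  rcases Nat.eq_zero_or_pos n with h0 | h1
  · subst h0
    simp [intChoose, Nat.choose_eq_zero_of_lt (by omega : m < m + 1)]
  · unfold intChoose
    rw [if_pos (by omega)]
    have ht : ((n : ℤ) - 1).toNat = n - 1 := by omega
    rw [ht, ← Nat.choose_symm (by omega : n - 1 ≤ m)]
    have hmn : m + 1 - n = m - (n - 1) := by omega
    rw [hmn]
end

section
/- For a fixed positive integer n, ∑_{k=1}^{n} (-1)^{n-k} · C(n,k) · C(n+k, n+1) = n. -/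
open Polynomial Finset

/-- The `m = n` specialization of the key binomial identity: for a positive integer
`n`, `∑_{k=1}^{n} (-1)^{n-k} C(n,k) C(n+k, n+1) = n` (the coefficient of `vol(P)`
in the degree formula for the Hurwitz form). -/
theorem sum_alternating_choose_eq_n (n : ℕ) (hn : 0 < n) :
    (∑ k ∈ Finset.Icc 1 n,
        (-1 : ℤ) ^ (n - k) * (n.choose k : ℤ) * ((n + k).choose (n + 1) : ℤ)) = n := by
  have hs := sub_pow (1 + X : ℤ[X]) 1 n
  rw [add_sub_cancel_left] at hs
  have key : ((X : ℤ[X]) ^ n * (1 + X) ^ n).coeff (n + 1)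
      = ∑ m ∈ range (n + 1), (-1 : ℤ) ^ (m + n) * (n.choose m : ℤ)
          * ((n + m).choose (n + 1) : ℤ) := by
    rw [hs, Finset.sum_mul, Polynomial.finset_sum_coeff]
    refine Finset.sum_congr rfl fun m hm => ?_
    have h1 : (-1 : ℤ[X]) ^ (m + n) * (1 + X) ^ m * 1 ^ (n - m) * (n.choose m : ℤ[X])
        * (1 + X) ^ n
        = Polynomial.C ((-1 : ℤ) ^ (m + n) * (n.choose m : ℤ)) * (1 + X) ^ (n + m) := by
      push_cast [map_mul, map_pow, map_neg, map_one, Polynomial.C_eq_natCast]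
      ring
    rw [h1, Polynomial.coeff_C_mul, coeff_one_add_X_pow]
  have hlhs : ((X : ℤ[X]) ^ n * (1 + X) ^ n).coeff (n + 1) = (n : ℤ) := by
    rw [show n + 1 = 1 + n by ring, Polynomial.coeff_X_pow_mul, coeff_one_add_X_pow,
      Nat.choose_one_right]
  rw [hlhs] at key
  rw [key, Finset.range_eq_Ico, Finset.Ico_add_one_right_eq_Icc,
    ← Finset.add_sum_erase (Finset.Icc 0 n) _ (Finset.mem_Icc.mpr ⟨le_refl 0, Nat.zero_le n⟩),
    Finset.Icc_erase_left, ← Finset.Icc_add_one_left_eq_Ioc]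
  simp only [Nat.add_zero, Nat.choose_eq_zero_of_lt (Nat.lt_succ_self n), Nat.cast_zero,
    mul_zero, zero_add, Nat.succ_eq_add_one, Nat.zero_add]
  refine (Finset.sum_congr rfl fun m hm => ?_).symm
  have hmn : m ≤ n := (Finset.mem_Icc.mp hm).2
  rw [show m + n = (n - m) + 2 * m by omega, pow_add, pow_mul]
  simp
end

section
/- For a fixed positive integer n, ∑_{k=1}^{n} (-1)^{n-k} · C(n,k) · C(n+k-1, n) = 1. -/
open Finset fwdDiff

/-- The `m = n-1` specialization of the key binomial identity: for a positive integer
`n`, `∑_{k=1}^{n} (-1)^{n-k} C(n,k) C(n+k-1, n) = 1` (the coefficient of `vol(∂P)`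
in the degree formula for the Hurwitz form). -/
theorem sum_alternating_choose_eq_one (n : ℕ) (hn : 0 < n) :
    (∑ k ∈ Finset.Icc 1 n,
        (-1 : ℤ) ^ (n - k) * (n.choose k : ℤ) * ((n + k - 1).choose n : ℤ)) = 1 := by
  have h1 := fwdDiff_iter_eq_sum_shift (1 : ℕ) (fun x => (x.choose n : ℤ)) n (n - 1)
  have h2 : (fwdDiff (1:ℕ))^[n] (fun x => (x.choose n : ℤ)) = fun x => (x.choose 0 : ℤ) := by
    simpa using fwdDiff_iter_choose 0 n
  rw [h2] at h1
  simp only [Nat.choose_zero_right, Nat.cast_one, smul_eq_mul, Nat.smul_one_eq_cast] at h1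
  rw [Finset.range_eq_Ico, Finset.sum_eq_sum_Ico_succ_bot (Nat.succ_pos n)] at h1
  have hz : ((n - 1).choose n : ℤ) = 0 := by
    rw [Nat.choose_eq_zero_of_lt (Nat.sub_lt hn one_pos)]; simp
  rw [Nat.mul_one, Nat.add_zero, hz, mul_zero, zero_add] at h1
  refine Eq.trans ?_ h1.symm
  apply Finset.sum_congr rfl
  intro k hk
  have : n - 1 + k * 1 = n + k - 1 := by omega
  rw [this]
end

section
/- For a fixed positive integer n and any integer i with 2 ≤ i ≤ n, ∑_{k=1}^{n} (-1)^{n-k} · C(n,k) · C(n+k-i, n-i+1) = 0. -/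
open Finset Nat Function fwdDiff

private lemma fwdDiff_choose_shift (c j : ℕ) :
    Δ_[1] (fun x ↦ ((x + c).choose (j + 1) : ℤ) : ℕ → ℤ) =
      fun x ↦ ((x + c).choose j : ℤ) := by
  ext x
  simp only [fwdDiff]
  rw [show x + 1 + c = x + c + 1 by ring, Nat.choose_succ_succ' (x + c) j]
  push_cast
  ring

private lemma fwdDiff_iter_choose_shift (c j k : ℕ) :
    (fwdDiff 1)^[k] (fun x ↦ ((x + c).choose (k + j) : ℤ) : ℕ → ℤ) =
      fun x ↦ ((x + c).choose j : ℤ) := by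
  induction' k with k IH generalizing j
  · simp
  · simp only [Function.iterate_succ_apply', add_assoc, add_comm 1 j, IH, fwdDiff_choose_shift]

private lemma fwdDiff_iter_zero (d : ℕ) :
    (fwdDiff (1:ℕ))^[d] (fun _ ↦ (0 : ℤ)) = fun _ ↦ (0 : ℤ) := by
  induction' d with d IH
  · rfl
  · rw [Function.iterate_succ_apply', IH, fwdDiff_const]

/-- The `m = n-i` specialization of the key binomial identity for `2 ≤ i ≤ n`:
`∑_{k=1}^{n} (-1)^{n-k} C(n,k) C(n+k-i, n-i+1) = 0` (the contributions of faces
of codimension at least `2` vanish in the Hurwitz degree formula). -/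
theorem sum_alternating_choose_eq_zero (n i : ℕ) (h2 : 2 ≤ i) (hin : i ≤ n) :
    (∑ k ∈ Finset.Icc 1 n,
        (-1 : ℤ) ^ (n - k) * (n.choose k : ℤ) * ((n + k - i).choose (n - i + 1) : ℤ)) = 0 := by
  set m := n - i with hm
  set f : ℕ → ℤ := fun x ↦ ((x + m).choose (m + 1) : ℤ) with hf
  -- the n-th forward difference of f vanishes since deg f = m+1 ≤ n-1
  have h1 : (fwdDiff 1)^[m + 1] f = fun x ↦ ((x + m).choose 0 : ℤ) := by
    simpa using fwdDiff_iter_choose_shift m 0 (m + 1)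
  have h2' : (fwdDiff (1:ℕ))^[m + 2] f = fun _ ↦ (0 : ℤ) := by
    rw [show m + 2 = (m + 1) + 1 from rfl, Function.iterate_succ_apply', h1]
    simp only [Nat.choose_zero_right, Nat.cast_one]
    exact fwdDiff_const 1 (1 : ℤ)
  have hzero : (fwdDiff (1:ℕ))^[n] f = fun _ ↦ (0 : ℤ) := by
    obtain ⟨d, hd⟩ : ∃ d, n = d + (m + 2) := ⟨n - (m + 2), by omega⟩
    rw [hd, Function.iterate_add, Function.comp_apply, h2', fwdDiff_iter_zero]
  have key := fwdDiff_iter_eq_sum_shift (1 : ℕ) f n 0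
  rw [hzero] at key
  simp only [smul_eq_mul, mul_one, zero_add] at key
  have hsum : ∑ k ∈ Finset.range (n + 1),
      (-1 : ℤ) ^ (n - k) * (n.choose k : ℤ) * ((k + m).choose (m + 1) : ℤ) = 0 := key.symm
  rw [Finset.sum_range_succ'] at hsum
  have h0 : ((0 + m).choose (m + 1) : ℤ) = 0 := by
    simp [Nat.choose_eq_zero_of_lt]
  rw [h0, mul_zero, add_zero] at hsum
  rw [show Finset.Icc 1 n = Finset.Ico 1 (n + 1) from rfl, Finset.sum_Ico_eq_sum_range,
    show n + 1 - 1 = n from rfl, ← hsum]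
  refine Finset.sum_congr rfl fun j _ ↦ ?_
  have e1 : n + (1 + j) - i = j + 1 + m := by omega
  have e2 : n - i + 1 = m + 1 := rfl
  have e3 : n - (1 + j) = n - (j + 1) := by omega
  rw [e1, e2, e3, show 1 + j = j + 1 by ring]
end

section
/- Let (X_P, L_P) be a smooth polarized toric variety. Then (X_P, L_P) is asymptotically numerically semistable if and only if it is K-semistable for toric degenerations; equivalently, F_P(g) := vol(∂P)∫_P g dv − vol(P)∫_{∂P} g dσ ≥ 0 holds for all rational concave piecewise-linear functions g on P if and only if it holds for all g_{φ,T} with T a regular triangulation of (P, iP ∩ ℤ^n) for all i ≫ 0. -/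
open MeasureTheory

/-- An affine function `ℓ : ℝ^n → ℝ` with rational coefficients. -/
def IsRatAffine {n : ℕ} (ℓ : (Fin n → ℝ) →ᵃ[ℝ] ℝ) : Prop :=
  ∃ (c : Fin n → ℚ) (d : ℚ), ∀ x, ℓ x = (∑ j, (c j : ℝ) * x j) + (d : ℝ)

/-- `g` is a rational concave piecewise-linear function on `P`: on `P` it is the
pointwise minimum of a nonempty finite family of affine functions with rational
coefficients. -/
def IsRatConcavePL {n : ℕ} (P : Set (Fin n → ℝ)) (g : (Fin n → ℝ) → ℝ) : Prop :=
  ∃ s : Finset ((Fin n → ℝ) →ᵃ[ℝ] ℝ), s.Nonempty ∧ (∀ ℓ ∈ s, IsRatAffine ℓ) ∧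
    ∀ x ∈ P, IsLeast ((fun ℓ : (Fin n → ℝ) →ᵃ[ℝ] ℝ => ℓ x) '' ↑s) (g x)

/-- `g` belongs to `PL(P; i)`: it is the concave piecewise-linear upper envelope of
its own restriction to the lattice points `P ∩ (ℤ/i)^n`, i.e. every `x ∈ P` is a
convex combination of points of `P ∩ (ℤ/i)^n` on which `g` is affine. -/
def MemLatticePL {n : ℕ} (P : Set (Fin n → ℝ)) (i : ℕ) (g : (Fin n → ℝ) → ℝ) : Prop :=
  ∀ x ∈ P, ∃ (m : ℕ) (w : Fin m → ℝ) (y : Fin m → (Fin n → ℝ)),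
    (∀ k, 0 ≤ w k) ∧ (∑ k, w k = 1) ∧
    (∀ k, y k ∈ P ∧ ∀ j, ∃ z : ℤ, y k j = (z : ℝ) / (i : ℝ)) ∧
    (∑ k, w k • y k = x) ∧ g x = ∑ k, w k * g (y k)


set_option linter.unusedSectionVars false


open scoped Classical

section Cut
variable {E : Type*} [AddCommGroup E] [Module ℝ E]

lemma apply_lineMap_real (ℓ : E →ᵃ[ℝ] ℝ) (u v : E) (c : ℝ) :
    ℓ (AffineMap.lineMap u v c) = (1 - c) * ℓ u + c * ℓ v := by
  rw [AffineMap.apply_lineMap, AffineMap.lineMap_apply_module]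
  simp [smul_eq_mul]

/-- The cut point of the segment `[u,v]` with the hyperplane `ℓ = 0`. -/
noncomputable def cutPt (ℓ : E →ᵃ[ℝ] ℝ) (u v : E) : E :=
  AffineMap.lineMap u v (ℓ u / (ℓ u - ℓ v))

lemma cutPt_mem_segment {ℓ : E →ᵃ[ℝ] ℝ} {u v : E} (hu : 0 < ℓ u) (hv : ℓ v ≤ 0) :
    cutPt ℓ u v ∈ segment ℝ u v := by
  rw [segment_eq_image_lineMap]
  exact ⟨_, ⟨div_nonneg hu.le (by linarith), by rw [div_le_one (by linarith)]; linarith⟩, rfl⟩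

lemma ℓ_cutPt {ℓ : E →ᵃ[ℝ] ℝ} {u v : E} (hu : 0 < ℓ u) (hv : ℓ v ≤ 0) :
    ℓ (cutPt ℓ u v) = 0 := by
  have hD : ℓ u - ℓ v ≠ 0 := by linarith
  rw [cutPt, apply_lineMap_real]
  field_simp
  ring

lemma cutPt_of_zero {ℓ : E →ᵃ[ℝ] ℝ} {u v : E} (hu : 0 < ℓ u) (hv : ℓ v = 0) :
    cutPt ℓ u v = v := by
  rw [cutPt, hv, sub_zero, div_self hu.ne', AffineMap.lineMap_apply_one]

lemma affine_map_sum {ι : Type*} (ℓ : E →ᵃ[ℝ] ℝ) (S : Finset ι) (w : ι → ℝ) (y : ι → E)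
    (hw : ∑ v ∈ S, w v = 1) : ℓ (∑ v ∈ S, w v • y v) = ∑ v ∈ S, w v * ℓ (y v) := by
  have hz : ∀ z : E, ℓ z = ℓ.linear z + ℓ 0 := by
    intro z
    conv_lhs => rw [show z = z +ᵥ (0 : E) by simp]
    rw [ℓ.map_vadd]
    rfl
  rw [hz, map_sum]
  simp_rw [LinearMap.map_smul, smul_eq_mul]
  have : ∀ v ∈ S, w v * ℓ (y v) = w v * ℓ.linear (y v) + w v * ℓ 0 := by
    intro v _; rw [hz (y v)]; ring
  rw [Finset.sum_congr rfl this, Finset.sum_add_distrib, ← Finset.sum_mul, hw, one_mul]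

end Cut
section Cut2
variable {E : Type*} [AddCommGroup E] [Module ℝ E] [DecidableEq E]

lemma hull_le_zero {ℓ : E →ᵃ[ℝ] ℝ} {S : Finset E} (hS : ∀ v ∈ S, ℓ v ≤ 0) {y : E}
    (hy : y ∈ convexHull ℝ (S : Set E)) : ℓ y ≤ 0 := by
  have hsub : convexHull ℝ (S : Set E) ⊆ {z | ℓ z ≤ 0} := by
    apply convexHull_min
    · intro v hv; exact hS v hv
    · exact (convex_Iic (0 : ℝ)).affine_preimage ℓ
  exact hsub hy

lemma segment_cut {ℓ : E →ᵃ[ℝ] ℝ} {u : E} (hu : 0 < ℓ u) (S : Finset E)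
    (hS : ∀ v ∈ S, ℓ v ≤ 0) {x y : E} (hy : y ∈ convexHull ℝ (S : Set E))
    (hx : x ∈ segment ℝ u y) (hx0 : ℓ x ≤ 0) :
    x ∈ convexHull ℝ ((S ∪ S.image (fun v => cutPt ℓ u v) : Finset E) : Set E) := by
  have hyle : ℓ y ≤ 0 := hull_le_zero hS hy
  rw [segment_eq_image_lineMap] at hx
  obtain ⟨a, ⟨ha0, ha1⟩, rfl⟩ := hx
  have hℓa : ℓ (AffineMap.lineMap u y a) = (1 - a) * ℓ u + a * ℓ y :=
    apply_lineMap_real ℓ u y a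
  rcases eq_or_lt_of_le hyle with hy0 | hyneg
  · -- ℓ y = 0 forces a = 1
    have ha : a = 1 := by nlinarith
    rw [ha, AffineMap.lineMap_apply_one]
    refine convexHull_mono ?_ hy
    rw [Finset.coe_union]
    exact Set.subset_union_left
  · -- ℓ y < 0
    obtain ⟨t, ht⟩ : ∃ t : ℝ, t = ℓ u / (ℓ u - ℓ y) := ⟨_, rfl⟩
    have hD : 0 < ℓ u - ℓ y := by linarith
    have ht1 : t < 1 := by rw [ht, div_lt_one hD]; linarith
    have ht0 : 0 < t := ht ▸ div_pos hu hD
    have hat : t ≤ a := by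
      rw [ht, div_le_iff₀ hD]; nlinarith
    obtain ⟨r, hr⟩ : ∃ r : ℝ, r = (a - t) / (1 - t) := ⟨_, rfl⟩
    have h1t : (1 : ℝ) - t ≠ 0 := by linarith
    have hr0 : 0 ≤ r := hr ▸ div_nonneg (by linarith) (by linarith)
    have hr1 : r ≤ 1 := by rw [hr, div_le_one (by linarith)]; linarith
    have e1 : r * (1 - t) = a - t := by rw [hr]; field_simp
    obtain ⟨q, hq⟩ : ∃ q : E, q = cutPt ℓ u y := ⟨_, rfl⟩
    have hqt : q = AffineMap.lineMap u y t := by rw [hq, cutPt, ht]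
    have hxqy : AffineMap.lineMap u y a = AffineMap.lineMap q y r := by
      rw [hqt]
      simp only [AffineMap.lineMap_apply_module]
      match_scalars
      · linear_combination e1
      · linear_combination -e1
    -- representation of y
    have hyhull : y ∈ convexHull ℝ (S : Set E) := hy
    rw [Finset.convexHull_eq] at hy
    obtain ⟨w, hw0, hw1, hwc⟩ := hy
    rw [Finset.centerMass_eq_of_sum_1 _ _ hw1] at hwc
    simp only [id] at hwc
    obtain ⟨μ, hμ⟩ : ∃ μ : E → ℝ, μ = fun v => w v * ((ℓ u - ℓ v) / (ℓ u - ℓ y)) := ⟨_, rfl⟩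
    have hμ0 : ∀ v ∈ S, 0 ≤ μ v := by
      intro v hv
      have := hS v hv
      rw [hμ]
      exact mul_nonneg (hw0 v hv) (div_nonneg (by linarith) hD.le)
    have hℓy : ∑ v ∈ S, w v * ℓ v = ℓ y := by
      have := affine_map_sum ℓ S w (fun v => v) hw1
      rw [hwc] at this
      exact this.symm
    have hμ1 : ∑ v ∈ S, μ v = 1 := by
      have hstep : ∀ v ∈ S, μ v = (w v * ℓ u - w v * ℓ v) / (ℓ u - ℓ y) := by
        intro v hv; rw [hμ]; field_simp
      rw [Finset.sum_congr rfl hstep, ← Finset.sum_div, Finset.sum_sub_distrib,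
        ← Finset.sum_mul, hw1, one_mul, hℓy, div_self hD.ne']
    have hq_mem : q ∈ convexHull ℝ ((S.image (fun v => cutPt ℓ u v) : Finset E) : Set E) := by
      have hcm : S.centerMass μ (fun v => cutPt ℓ u v)
          ∈ convexHull ℝ ((S.image (fun v => cutPt ℓ u v) : Finset E) : Set E) :=
        S.centerMass_mem_convexHull hμ0 (by rw [hμ1]; norm_num)
          (fun v hv => Finset.mem_coe.mpr (Finset.mem_image_of_mem _ hv))
      have hcq : S.centerMass μ (fun v => cutPt ℓ u v) = q := by
        rw [Finset.centerMass_eq_of_sum_1 _ _ hμ1]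
        have hterm : ∀ v ∈ S, μ v • cutPt ℓ u v = (μ v - w v * t) • u + (w v * t) • v := by
          intro v hv
          have hv0 := hS v hv
          have hDv : ℓ u - ℓ v ≠ 0 := by linarith
          rw [cutPt, AffineMap.lineMap_apply_module, smul_add, smul_smul, smul_smul]
          have c1 : μ v * (1 - ℓ u / (ℓ u - ℓ v)) = μ v - w v * t := by
            rw [hμ, ht]; field_simp
          have c2 : μ v * (ℓ u / (ℓ u - ℓ v)) = w v * t := by
            rw [hμ, ht]; field_simp
          rw [c1, c2]
        rw [Finset.sum_congr rfl hterm, Finset.sum_add_distrib, ← Finset.sum_smul]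
        have hterm2 : ∀ v ∈ S, (w v * t) • v = t • (w v • v) := by
          intro v _; rw [mul_comm, mul_smul]
        rw [Finset.sum_congr rfl hterm2, ← Finset.smul_sum, hwc]
        have hsum : ∑ v ∈ S, (μ v - w v * t) = 1 - t := by
          rw [Finset.sum_sub_distrib, hμ1, ← Finset.sum_mul, hw1, one_mul]
        rw [hsum, hqt, AffineMap.lineMap_apply_module]
      rw [← hcq]; exact hcm
    -- conclude
    rw [hxqy]
    have hqC : q ∈ convexHull ℝ ((S ∪ S.image (fun v => cutPt ℓ u v) : Finset E) : Set E) :=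
      convexHull_mono (by rw [Finset.coe_union]; exact Set.subset_union_right) hq_mem
    have hyC : y ∈ convexHull ℝ ((S ∪ S.image (fun v => cutPt ℓ u v) : Finset E) : Set E) :=
      convexHull_mono (by rw [Finset.coe_union]; exact Set.subset_union_left) hyhull
    have hseg : AffineMap.lineMap q y r ∈ segment ℝ q y := by
      rw [segment_eq_image_lineMap]; exact ⟨r, ⟨hr0, hr1⟩, rfl⟩
    exact (convex_convexHull ℝ _).segment_subset hqC hyC hseg

end Cut2
section Cut3
variable {E : Type*} [AddCommGroup E] [Module ℝ E] [DecidableEq E]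

/-- All cut points of segments between vertices of `T` on opposite sides of `ℓ = 0`. -/
noncomputable def cutFinset (ℓ : E →ᵃ[ℝ] ℝ) (T : Finset E) : Finset E :=
  ((T ×ˢ T).filter (fun p => 0 < ℓ p.1 ∧ ℓ p.2 ≤ 0)).image (fun p => cutPt ℓ p.1 p.2)

lemma cutFinset_zero {ℓ : E →ᵃ[ℝ] ℝ} {T : Finset E} {p : E} (hp : p ∈ cutFinset ℓ T) :
    ℓ p = 0 := by
  rw [cutFinset, Finset.mem_image] at hp
  obtain ⟨⟨u, v⟩, huv, rfl⟩ := hp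
  rw [Finset.mem_filter] at huv
  exact ℓ_cutPt huv.2.1 huv.2.2

lemma cutFinset_subset_hull {ℓ : E →ᵃ[ℝ] ℝ} {T : Finset E} {p : E} (hp : p ∈ cutFinset ℓ T) :
    p ∈ convexHull ℝ (T : Set E) := by
  rw [cutFinset, Finset.mem_image] at hp
  obtain ⟨⟨u, v⟩, huv, rfl⟩ := hp
  rw [Finset.mem_filter, Finset.mem_product] at huv
  exact (convex_convexHull ℝ _).segment_subset
    (subset_convexHull ℝ _ huv.1.1) (subset_convexHull ℝ _ huv.1.2)
    (cutPt_mem_segment huv.2.1 huv.2.2)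

lemma cutFinset_mono {ℓ : E →ᵃ[ℝ] ℝ} {S T : Finset E} (hST : S ⊆ T) :
    cutFinset ℓ S ⊆ cutFinset ℓ T := by
  apply Finset.image_subset_image
  exact Finset.filter_subset_filter _ (Finset.product_subset_product hST hST)

lemma cut_main (ℓ : E →ᵃ[ℝ] ℝ) (T : Finset E) :
    ∀ x ∈ convexHull ℝ (T : Set E), ℓ x ≤ 0 →
      x ∈ convexHull ℝ (((T.filter (fun v => ℓ v ≤ 0) ∪ cutFinset ℓ T) : Finset E) : Set E) := by
  induction T using Finset.strongInduction with
  | _ T ih =>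
    intro x hx hx0
    by_cases hpos : ∀ v ∈ T, ℓ v ≤ 0
    · refine convexHull_mono ?_ hx
      intro v hv
      rw [Finset.mem_coe] at hv ⊢
      exact Finset.mem_union_left _ (Finset.mem_filter.mpr ⟨hv, hpos v hv⟩)
    · push_neg at hpos
      obtain ⟨u, huT, hu'⟩ := hpos
      have hu : 0 < ℓ u := hu'
      set S := T.erase u with hSdef
      have hTS : insert u S = T := Finset.insert_erase huT
      by_cases hSne : S.Nonempty
      · have hcoe : (T : Set E) = insert u (S : Set E) := by
          rw [← hTS]; simp
        rw [hcoe, convexHull_insert (hSne.to_set.mono (Finset.coe_subset.mpr (le_refl S)))] at hx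
        rw [mem_convexJoin] at hx
        obtain ⟨a, ha, y, hy, hseg⟩ := hx
        rw [Set.mem_singleton_iff] at ha
        rw [ha] at hseg
        -- ℓ y ≤ 0
        have hyle : ℓ y ≤ 0 := by
          by_contra hyp
          push_neg at hyp
          rw [segment_eq_image_lineMap] at hseg
          obtain ⟨c, ⟨hc0, hc1⟩, rfl⟩ := hseg
          rw [apply_lineMap_real] at hx0
          have h1 : 0 ≤ (1 - c) * ℓ u := mul_nonneg (by linarith) hu.le
          have h2 : 0 ≤ c * ℓ y := mul_nonneg hc0 hyp.le
          have h3 : (1 - c) * ℓ u = 0 := by linarith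
          have h4 : c = 1 := by
            rcases mul_eq_zero.mp h3 with h | h
            · linarith
            · exact absurd h (ne_of_gt hu)
          rw [h4] at hx0
          norm_num at hx0
          linarith
        have hSsub : S ⊂ T := Finset.erase_ssubset huT
        have hyC := ih S hSsub y hy hyle
        set S' : Finset E := S.filter (fun v => ℓ v ≤ 0) ∪ cutFinset ℓ S with hS'def
        have hS' : ∀ v ∈ S', ℓ v ≤ 0 := by
          intro v hv
          rcases Finset.mem_union.mp hv with h | h
          · exact (Finset.mem_filter.mp h).2
          · exact le_of_eq (cutFinset_zero h)
        have hxmem := segment_cut hu S' hS' hyC hseg hx0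
        refine convexHull_mono ?_ hxmem
        intro p hp
        rw [Finset.mem_coe] at hp ⊢
        have hS'T : ∀ v ∈ S', v ∈ T.filter (fun v => ℓ v ≤ 0) ∪ cutFinset ℓ T := by
          intro v hv
          rcases Finset.mem_union.mp hv with h | h
          · exact Finset.mem_union_left _
              (Finset.filter_subset_filter _ (Finset.erase_subset u T) h)
          · exact Finset.mem_union_right _ (cutFinset_mono (Finset.erase_subset u T) h)
        rcases Finset.mem_union.mp hp with h | h
        · exact hS'T p h
        · rw [Finset.mem_image] at h
          obtain ⟨v, hvS', rfl⟩ := h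
          have hvle : ℓ v ≤ 0 := hS' v hvS'
          rcases eq_or_lt_of_le hvle with hv0 | hvneg
          · rw [cutPt_of_zero hu hv0]
            exact hS'T v hvS'
          · -- v ∈ S (not a cut point since ℓ v < 0)
            have hvS : v ∈ S := by
              rcases Finset.mem_union.mp hvS' with h | h
              · exact Finset.mem_of_mem_filter v h
              · exact absurd (cutFinset_zero h) (by linarith)
            refine Finset.mem_union_right _ ?_
            rw [cutFinset, Finset.mem_image]
            refine ⟨(u, v), ?_, rfl⟩
            rw [Finset.mem_filter, Finset.mem_product]
            exact ⟨⟨huT, (Finset.erase_subset u T) hvS⟩, hu, hvle⟩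
      · -- S empty : T = {u}, so x = u, contradicting ℓ x ≤ 0 < ℓ u
        rw [Finset.not_nonempty_iff_eq_empty] at hSne
        rw [hSne] at hTS
        rw [← hTS] at hx
        have hsing : ((insert u (∅ : Finset E) : Finset E) : Set E) = {u} := by simp
        rw [hsing, convexHull_singleton, Set.mem_singleton_iff] at hx
        subst hx
        linarith

end Cut3
section Rat

/-- A point with all rational coordinates. -/
def RatPt {n : ℕ} (p : Fin n → ℝ) : Prop := ∀ j, ∃ q : ℚ, p j = (q : ℝ)

lemma ratAffine_val {n : ℕ} {ℓ : (Fin n → ℝ) →ᵃ[ℝ] ℝ} (hℓ : IsRatAffine ℓ)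
    {x : Fin n → ℝ} (hx : RatPt x) : ∃ q : ℚ, ℓ x = (q : ℝ) := by
  obtain ⟨c, d, hcd⟩ := hℓ
  choose r hr using hx
  refine ⟨∑ j, c j * r j + d, ?_⟩
  rw [hcd]
  push_cast
  simp_rw [hr]

lemma ratPt_cutPt {n : ℕ} {ℓ : (Fin n → ℝ) →ᵃ[ℝ] ℝ} (hℓ : IsRatAffine ℓ)
    {u v : Fin n → ℝ} (hu : RatPt u) (hv : RatPt v) : RatPt (cutPt ℓ u v) := by
  obtain ⟨qu, hqu⟩ := ratAffine_val hℓ hu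
  obtain ⟨qv, hqv⟩ := ratAffine_val hℓ hv
  intro j
  obtain ⟨a, ha⟩ := hu j
  obtain ⟨b, hb⟩ := hv j
  have hcoord : cutPt ℓ u v j = (1 - ℓ u / (ℓ u - ℓ v)) * u j + (ℓ u / (ℓ u - ℓ v)) * v j := by
    rw [cutPt, AffineMap.lineMap_apply_module]
    simp [smul_eq_mul]
  refine ⟨(1 - qu / (qu - qv)) * a + (qu / (qu - qv)) * b, ?_⟩
  rw [hcoord, hqu, hqv, ha, hb]
  push_cast
  ring

lemma cut_step {n : ℕ} (ℓ : (Fin n → ℝ) →ᵃ[ℝ] ℝ) (hℓ : IsRatAffine ℓ)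
    (W : Finset (Fin n → ℝ)) (hW : ∀ p ∈ W, RatPt p) :
    ∃ W' : Finset (Fin n → ℝ), (∀ p ∈ W', RatPt p) ∧
      (W' : Set (Fin n → ℝ)) ⊆ convexHull ℝ (W : Set (Fin n → ℝ)) ∩ {x | ℓ x ≤ 0} ∧
      convexHull ℝ (W : Set (Fin n → ℝ)) ∩ {x | ℓ x ≤ 0} ⊆ convexHull ℝ ((W.filter (fun v => ℓ v ≤ 0) ∪ cutFinset ℓ W : Finset (Fin n → ℝ)) : Set (Fin n → ℝ)) ∧
      (W.filter (fun v => ℓ v ≤ 0) ∪ cutFinset ℓ W : Finset (Fin n → ℝ)) = W' := by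
  refine ⟨W.filter (fun v => ℓ v ≤ 0) ∪ cutFinset ℓ W, ?_, ?_, ?_, rfl⟩
  · intro p hp
    rcases Finset.mem_union.mp hp with h | h
    · exact hW p (Finset.mem_of_mem_filter p h)
    · rw [cutFinset, Finset.mem_image] at h
      obtain ⟨⟨a, b⟩, hab, rfl⟩ := h
      rw [Finset.mem_filter, Finset.mem_product] at hab
      exact ratPt_cutPt hℓ (hW _ hab.1.1) (hW _ hab.1.2)
  · intro p hp
    rw [Finset.mem_coe] at hp
    rcases Finset.mem_union.mp hp with h | h
    · exact ⟨subset_convexHull ℝ _ (Finset.mem_coe.mpr (Finset.mem_of_mem_filter p h)),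
        (Finset.mem_filter.mp h).2⟩
    · exact ⟨cutFinset_subset_hull h, le_of_eq (cutFinset_zero h)⟩
  · rintro x ⟨hx1, hx2⟩
    exact cut_main ℓ W x hx1 hx2

lemma cut_step' {n : ℕ} (ℓ : (Fin n → ℝ) →ᵃ[ℝ] ℝ) (hℓ : IsRatAffine ℓ)
    (W : Finset (Fin n → ℝ)) (hW : ∀ p ∈ W, RatPt p) :
    ∃ W' : Finset (Fin n → ℝ), (∀ p ∈ W', RatPt p) ∧
      (W' : Set (Fin n → ℝ)) ⊆ convexHull ℝ (W : Set (Fin n → ℝ)) ∩ {x | ℓ x ≤ 0} ∧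
      convexHull ℝ (W : Set (Fin n → ℝ)) ∩ {x | ℓ x ≤ 0} ⊆ convexHull ℝ (W' : Set (Fin n → ℝ)) := by
  obtain ⟨W', h1, h2, h3, h4⟩ := cut_step ℓ hℓ W hW
  exact ⟨W', h1, h2, by rw [← h4]; exact h3⟩

lemma cut_iter {n : ℕ} (cs : Finset ((Fin n → ℝ) →ᵃ[ℝ] ℝ)) (hcs : ∀ c ∈ cs, IsRatAffine c) :
    ∀ W : Finset (Fin n → ℝ), (∀ p ∈ W, RatPt p) →
    ∃ W' : Finset (Fin n → ℝ), (∀ p ∈ W', RatPt p) ∧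
      (W' : Set (Fin n → ℝ)) ⊆ convexHull ℝ (W : Set (Fin n → ℝ)) ∩ {x | ∀ c ∈ cs, c x ≤ 0} ∧
      convexHull ℝ (W : Set (Fin n → ℝ)) ∩ {x | ∀ c ∈ cs, c x ≤ 0}
        ⊆ convexHull ℝ (W' : Set (Fin n → ℝ)) := by
  induction cs using Finset.induction_on with
  | empty =>
    intro W hW
    refine ⟨W, hW, ?_, ?_⟩
    · intro p hp
      simp only [Set.mem_inter_iff, Set.mem_setOf_eq]
      exact ⟨subset_convexHull ℝ _ hp, by simp⟩
    · intro x hx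
      exact hx.1
  | @insert c cs hc ih =>
    intro W hW
    have hcrat : IsRatAffine c := hcs c (Finset.mem_insert_self _ _)
    obtain ⟨W1, hW1rat, hW1sub, hW1sup⟩ := cut_step' c hcrat W hW
    obtain ⟨W', hW'rat, hW'sub, hW'sup⟩ :=
      ih (fun c' hc' => hcs c' (Finset.mem_insert_of_mem hc')) W1 hW1rat
    have hsetins : {x : Fin n → ℝ | ∀ c' ∈ insert c cs, c' x ≤ 0}
        = ({x | c x ≤ 0} ∩ {x | ∀ c' ∈ cs, c' x ≤ 0}) := by
      ext x
      simp only [Set.mem_setOf_eq, Set.mem_inter_iff, Finset.mem_insert]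
      constructor
      · intro h
        exact ⟨h c (Or.inl rfl), fun c' hc' => h c' (Or.inr hc')⟩
      · rintro ⟨h1, h2⟩ c' (rfl | hc')
        · exact h1
        · exact h2 c' hc'
    have hW1hull : convexHull ℝ (W1 : Set (Fin n → ℝ))
        ⊆ convexHull ℝ (W : Set (Fin n → ℝ)) ∩ {x | c x ≤ 0} := by
      apply convexHull_min hW1sub
      exact (convex_convexHull ℝ _).inter ((convex_Iic (0 : ℝ)).affine_preimage c)
    refine ⟨W', hW'rat, ?_, ?_⟩
    · intro p hp
      have h1 := hW'sub hp
      have h2 := hW1hull h1.1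
      rw [hsetins]
      exact ⟨h2.1, h2.2, h1.2⟩
    · intro x hx
      rw [hsetins] at hx
      apply hW'sup
      refine ⟨hW1sup ⟨hx.1, hx.2.1⟩, hx.2.2⟩

lemma ratPt_common_den {n : ℕ} (W : Finset (Fin n → ℝ)) (hW : ∀ p ∈ W, RatPt p) :
    ∃ d : ℕ, 0 < d ∧ ∀ p ∈ W, ∀ j, ∃ z : ℤ, p j = (z : ℝ) / (d : ℝ) := by
  induction W using Finset.induction_on with
  | empty => exact ⟨1, one_pos, by simp⟩
  | @insert p W hp ih =>
    obtain ⟨d, hd, hdall⟩ := ih (fun q hq => hW q (Finset.mem_insert_of_mem hq))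
    have hpR : RatPt p := hW p (Finset.mem_insert_self _ _)
    choose r hr using hpR
    have hdenpos : ∀ k : Fin n, (0 : ℝ) < ((r k).den : ℝ) := by
      intro k; exact_mod_cast (r k).pos
    refine ⟨d * ∏ k, (r k).den, by positivity, ?_⟩
    intro q hq j
    have hdR : ((d : ℝ)) ≠ 0 := by positivity
    rcases Finset.mem_insert.mp hq with rfl | hqW
    · refine ⟨(r j).num * (d : ℤ) * (∏ k ∈ Finset.univ.erase j, ((r k).den : ℤ)), ?_⟩
      have hprod : (d * ∏ k, (r k).den : ℕ)
          = d * ((r j).den * ∏ k ∈ Finset.univ.erase j, (r k).den) := by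
        congr 1
        exact (Finset.mul_prod_erase _ _ (Finset.mem_univ j)).symm
      rw [hr j, Rat.cast_def, hprod]
      push_cast
      have h1 : ((r j).den : ℝ) ≠ 0 := (hdenpos j).ne'
      have h3 : (∏ k ∈ Finset.univ.erase j, ((r k).den : ℝ)) ≠ 0 := by
        apply Finset.prod_ne_zero_iff.mpr
        intro k _
        exact (hdenpos k).ne'
      field_simp
    · obtain ⟨z, hz⟩ := hdall q hqW j
      refine ⟨z * ∏ k, ((r k).den : ℤ), ?_⟩
      rw [hz]
      push_cast
      have h3 : (∏ k, ((r k).den : ℝ)) ≠ 0 := by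
        apply Finset.prod_ne_zero_iff.mpr
        intro k _
        exact (hdenpos k).ne'
      field_simp

end Rat
lemma memLatticePL_of_ratConcavePL {n : ℕ} (P : Set (Fin n → ℝ))
    (hP : ∃ s : Finset (Fin n → ℝ),
      (∀ v ∈ s, ∀ j, ∃ z : ℤ, v j = (z : ℝ)) ∧ P = convexHull ℝ (↑s : Set (Fin n → ℝ)))
    (g : (Fin n → ℝ) → ℝ) (hg : IsRatConcavePL P g) (i₀ : ℕ) :
    ∃ i : ℕ, i ≥ i₀ ∧ MemLatticePL P i g := by
  obtain ⟨V, hVint, hPV⟩ := hP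
  obtain ⟨s, hsne, hsrat, hsleast⟩ := hg
  have hVrat : ∀ p ∈ V, RatPt p := by
    intro p hp j
    obtain ⟨z, hz⟩ := hVint p hp j
    exact ⟨(z : ℚ), by rw [hz]; push_cast; ring⟩
  -- for each ℓ ∈ s, a rational vertex set for the cell of ℓ
  have key : ∀ ℓ ∈ s, ∃ W' : Finset (Fin n → ℝ), (∀ p ∈ W', RatPt p) ∧
      (W' : Set (Fin n → ℝ)) ⊆ convexHull ℝ (V : Set (Fin n → ℝ))
          ∩ {x | ∀ ℓ' ∈ s, ℓ x ≤ ℓ' x} ∧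
      convexHull ℝ (V : Set (Fin n → ℝ)) ∩ {x | ∀ ℓ' ∈ s, ℓ x ≤ ℓ' x}
        ⊆ convexHull ℝ (W' : Set (Fin n → ℝ)) := by
    intro ℓ hℓ
    classical
    have hcs : ∀ c ∈ s.image (fun ℓ' => ℓ - ℓ'), IsRatAffine c := by
      intro c hc
      rw [Finset.mem_image] at hc
      obtain ⟨ℓ', hℓ', rfl⟩ := hc
      obtain ⟨c1, d1, h1⟩ := hsrat ℓ hℓ
      obtain ⟨c2, d2, h2⟩ := hsrat ℓ' hℓ'
      refine ⟨c1 - c2, d1 - d2, ?_⟩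
      intro x
      have hsub : (ℓ - ℓ') x = ℓ x - ℓ' x := rfl
      rw [hsub, h1 x, h2 x]
      simp only [Pi.sub_apply]
      push_cast
      have : ∀ j ∈ Finset.univ, ((c1 j : ℝ) - (c2 j : ℝ)) * x j
          = (c1 j : ℝ) * x j - (c2 j : ℝ) * x j := by
        intro j _; ring
      rw [Finset.sum_congr rfl this, Finset.sum_sub_distrib]
      ring
    obtain ⟨W', h1, h2, h3⟩ := cut_iter (s.image (fun ℓ' => ℓ - ℓ')) hcs V hVrat
    have hset : {x : Fin n → ℝ | ∀ c ∈ s.image (fun ℓ' => ℓ - ℓ'), c x ≤ 0}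
        = {x : Fin n → ℝ | ∀ ℓ' ∈ s, ℓ x ≤ ℓ' x} := by
      ext x
      simp only [Set.mem_setOf_eq, Finset.mem_image]
      constructor
      · intro h ℓ' hℓ'
        have := h (ℓ - ℓ') ⟨ℓ', hℓ', rfl⟩
        have hsub : (ℓ - ℓ') x = ℓ x - ℓ' x := rfl
        rw [hsub] at this
        linarith
      · rintro h c ⟨ℓ', hℓ', rfl⟩
        have hsub : (ℓ - ℓ') x = ℓ x - ℓ' x := rfl
        rw [hsub]
        have := h ℓ' hℓ'
        linarith
    rw [hset] at h2 h3
    exact ⟨W', h1, h2, h3⟩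
  choose F hF1 hF2 hF3 using key
  have hWall : ∃ Wall : Finset (Fin n → ℝ), (∀ p ∈ Wall, RatPt p) ∧
      ∀ ℓ, ∀ hℓ : ℓ ∈ s, ∀ p ∈ F ℓ hℓ, p ∈ Wall := by
    classical
    refine ⟨s.attach.biUnion (fun ℓ => F ℓ.1 ℓ.2), ?_, ?_⟩
    · intro p hp
      rw [Finset.mem_biUnion] at hp
      obtain ⟨ℓ, _, hp⟩ := hp
      exact hF1 ℓ.1 ℓ.2 p hp
    · intro ℓ hℓ p hp
      rw [Finset.mem_biUnion]
      exact ⟨⟨ℓ, hℓ⟩, Finset.mem_attach _ _, hp⟩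
  obtain ⟨Wall, hWallrat, hWallmem⟩ := hWall
  obtain ⟨d, hd, hden⟩ := ratPt_common_den Wall hWallrat
  refine ⟨d * (i₀ + 1), ?_, ?_⟩
  · calc i₀ ≤ i₀ + 1 := Nat.le_succ _
      _ ≤ d * (i₀ + 1) := Nat.le_mul_of_pos_left _ hd
  -- MemLatticePL
  intro x hx
  obtain ⟨hmem, hlb⟩ := hsleast x hx
  obtain ⟨ℓ, hℓs', hℓx'⟩ := hmem
  have hℓx : ℓ x = g x := hℓx'
  have hℓs : ℓ ∈ s := Finset.mem_coe.mp hℓs'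
  have hxC : x ∈ convexHull ℝ (V : Set (Fin n → ℝ)) ∩ {x | ∀ ℓ' ∈ s, ℓ x ≤ ℓ' x} := by
    constructor
    · rw [← hPV]; exact hx
    · intro ℓ' hℓ'
      have hb : g x ≤ ℓ' x := hlb ⟨ℓ', Finset.mem_coe.mpr hℓ', rfl⟩
      rw [hℓx]
      exact hb
  have hxW := hF3 ℓ hℓs hxC
  set Wl := F ℓ hℓs with hWl
  rw [Finset.convexHull_eq] at hxW
  obtain ⟨w, hw0, hw1, hwc⟩ := hxW
  rw [Finset.centerMass_eq_of_sum_1 _ _ hw1] at hwc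
  simp only [id] at hwc
  have hsumR : ∀ G : (Fin n → ℝ) → ℝ,
      ∑ k : Fin Wl.card, G ((Wl.equivFin.symm k : {v // v ∈ Wl}) : Fin n → ℝ)
        = ∑ v ∈ Wl, G v := by
    intro G
    rw [← Finset.sum_coe_sort Wl G]
    exact Equiv.sum_comp Wl.equivFin.symm (fun a => G (a : Fin n → ℝ))
  have hsumV : ∀ G : (Fin n → ℝ) → (Fin n → ℝ),
      ∑ k : Fin Wl.card, G ((Wl.equivFin.symm k : {v // v ∈ Wl}) : Fin n → ℝ)
        = ∑ v ∈ Wl, G v := by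
    intro G
    rw [← Finset.sum_coe_sort Wl G]
    exact Equiv.sum_comp Wl.equivFin.symm (fun a => G (a : Fin n → ℝ))
  have hWlC : ∀ v ∈ Wl, v ∈ convexHull ℝ (V : Set (Fin n → ℝ))
      ∩ {x | ∀ ℓ' ∈ s, ℓ x ≤ ℓ' x} := by
    intro v hv
    exact hF2 ℓ hℓs (Finset.mem_coe.mpr hv)
  have hWlP : ∀ v ∈ Wl, v ∈ P := by
    intro v hv
    rw [hPV]
    exact (hWlC v hv).1
  have hgW : ∀ v ∈ Wl, g v = ℓ v := by
    intro v hv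
    obtain ⟨hmem', hlb'⟩ := hsleast v (hWlP v hv)
    obtain ⟨ℓ₂, hℓ₂s, hℓ₂v'⟩ := hmem'
    have hℓ₂v : ℓ₂ v = g v := hℓ₂v'
    have h1 : g v ≤ ℓ v := hlb' ⟨ℓ, Finset.mem_coe.mpr hℓs, rfl⟩
    have h2 : ℓ v ≤ ℓ₂ v := (hWlC v hv).2 ℓ₂ (Finset.mem_coe.mp hℓ₂s)
    rw [hℓ₂v] at h2
    linarith
  refine ⟨Wl.card, fun k => w ((Wl.equivFin.symm k : {v // v ∈ Wl}) : Fin n → ℝ),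
    fun k => ((Wl.equivFin.symm k : {v // v ∈ Wl}) : Fin n → ℝ), ?_, ?_, ?_, ?_, ?_⟩
  · intro k
    exact hw0 _ (Wl.equivFin.symm k).2
  · exact (hsumR w).trans hw1
  · intro k
    have hk : ((Wl.equivFin.symm k : {v // v ∈ Wl}) : Fin n → ℝ) ∈ Wl :=
      (Wl.equivFin.symm k).2
    refine ⟨hWlP _ hk, ?_⟩
    intro j
    obtain ⟨z, hz⟩ := hden _ (hWallmem ℓ hℓs _ hk) j
    refine ⟨z * (i₀ + 1), ?_⟩
    show ((Wl.equivFin.symm k : {v // v ∈ Wl}) : Fin n → ℝ) j = _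
    rw [hz]
    have h1 : ((i₀ : ℝ) + 1) ≠ 0 := by positivity
    have h2 : ((d : ℝ)) ≠ 0 := by positivity
    push_cast
    field_simp
  · exact (hsumV (fun v => w v • v)).trans hwc
  · calc g x = ℓ x := hℓx.symm
      _ = ℓ (∑ v ∈ Wl, w v • v) := by rw [hwc]
      _ = ∑ v ∈ Wl, w v * ℓ v := affine_map_sum ℓ Wl w (fun v => v) hw1
      _ = ∑ v ∈ Wl, w v * g v := by
          refine Finset.sum_congr rfl ?_
          intro v hv
          rw [hgW v hv]
      _ = _ := (hsumR (fun v => w v * g v)).symm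

/-- **Theorem 6.1: asymptotic numerical semistability is equivalent to
K-semistability for toric degenerations.** Let `(X_P, L_P)` be a smooth polarized
toric variety whose moment polytope `P ⊂ ℝ^n` is a lattice polytope (the convex
hull of finitely many integral points), and let `μbd` be the lattice-normalized
boundary measure `dσ` on `∂P = frontier P`. Writing
`F_P(g) = vol(∂P)·∫_P g dv − vol(P)·∫_{∂P} g dσ`, the following are equivalent:
`F_P(g) ≥ 0` for every rational concave piecewise-linear function `g` on `P`
(K-semistability for toric degenerations), and `F_P(g) ≥ 0` for all sufficiently
large `i` and every `g ∈ PL(P;i)` — the concave piecewise-linear functions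
subordinate to (regular) triangulations of `(P, iP ∩ ℤ^n)` (asymptotic numerical
semistability). -/
theorem asymptotically_numerically_semistable_iff_Ksemistable (n : ℕ)
    (P : Set (Fin n → ℝ)) (μbd : Measure (Fin n → ℝ))
    (hP : ∃ s : Finset (Fin n → ℝ),
      (∀ v ∈ s, ∀ j, ∃ z : ℤ, v j = (z : ℝ)) ∧ P = convexHull ℝ (↑s : Set (Fin n → ℝ))) :
    ((∃ i₀ : ℕ, ∀ i ≥ i₀, ∀ g : (Fin n → ℝ) → ℝ,
        IsRatConcavePL P g → MemLatticePL P i g →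
          0 ≤ (μbd (frontier P)).toReal * (∫ x in P, g x)
                - (volume P).toReal * ∫ x in frontier P, g x ∂μbd)
      ↔ (∀ g : (Fin n → ℝ) → ℝ, IsRatConcavePL P g →
          0 ≤ (μbd (frontier P)).toReal * (∫ x in P, g x)
                - (volume P).toReal * ∫ x in frontier P, g x ∂μbd)) := by
  constructor
  · rintro ⟨i₀, hA⟩ g hg
    obtain ⟨i, hi, hmem⟩ := memLatticePL_of_ratConcavePL P hP g hg i₀
    exact hA i hi g hg hmem
  · intro h
    exact ⟨0, fun i _ g hg _ => h g hg⟩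
end
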